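/- arXiv:1406.4594 — 2 statements merged into one kernel-verified Lean document; each statement's English description precedes it below -/
import Mathlib

section
/- Let F be a minimally parabolic geometrically finite Kleinian group, (G,ρ) ∈ D(F), and î : Λ_F → Λ_G the Cannon-Thurston map. If the cardinality of î⁻¹(ξ) is greater than 1 for a point ξ ∈ Λ_G, then ξ is not a conical limit point of G. -/
noncomputable section

open MeasureTheory Filter Topology Set

/-- `SL(2,ℂ)`. -/
abbrev SL2C := Matrix.SpecialLinearGroup (Fin 2) ℂ

/-- `PSL(2,ℂ)`, the group of Möbius transformations of `S²∞ = ∂ℍ³`. -/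
abbrev PSL2C := SL2C ⧸ Subgroup.center SL2C

/-- Euclidean 3-space. -/
abbrev E3 := EuclideanSpace ℝ (Fin 3)

/-- The closed Poincaré ball `ℍ³ ∪ S²∞`. -/
abbrev PBall : Set E3 := Metric.closedBall (0 : E3) 1

/-- The boundary sphere `S²∞` of the Poincaré ball. -/
def Sph : Set PBall := {x | ‖(x : E3)‖ = 1}

/-- The origin of the Poincaré ball. -/
def origin : PBall := ⟨0, by simp⟩

/-- Inverse hyperbolic cosine. -/
def arcosh (t : ℝ) : ℝ := Real.log (t + Real.sqrt (t ^ 2 - 1))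

/-- The hyperbolic distance in the Poincaré ball model (with junk value `0` if one of
the arguments lies on the boundary sphere). -/
def hdist (x y : PBall) : ℝ :=
  arcosh (1 + 2 * ‖(x : E3) - (y : E3)‖ ^ 2 /
    ((1 - ‖(x : E3)‖ ^ 2) * (1 - ‖(y : E3)‖ ^ 2)))

/-- The point `t·ξ` on the Euclidean radial segment (= hyperbolic geodesic ray) from the
origin toward `ξ`, with `t` clamped into `[0,1]`. -/
def segPt (ξ : PBall) (t : ℝ) : PBall :=
  ⟨(max 0 (min t 1)) • (ξ : E3), by
    have h0 : (0 : ℝ) ≤ max 0 (min t 1) := le_max_left 0 _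
    have h1 : max 0 (min t 1) ≤ 1 := max_le zero_le_one (min_le_right _ _)
    have hξ : ‖(ξ : E3)‖ ≤ 1 := by
      have h := ξ.2
      rwa [Metric.mem_closedBall, dist_zero_right] at h
    rw [Metric.mem_closedBall, dist_zero_right, norm_smul, Real.norm_eq_abs,
      abs_of_nonneg h0]
    calc max 0 (min t 1) * ‖(ξ : E3)‖ ≤ 1 * 1 :=
          mul_le_mul h1 hξ (norm_nonneg _) zero_le_one
      _ = 1 := one_mul 1⟩

section Setting

variable [MulAction PSL2C PBall]

/-- The action of `PSL(2,ℂ)` on the closed Poincaré ball is the Möbius action: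
isometric for the hyperbolic metric, preserving the boundary sphere, continuous
and faithful. -/
def IsMobiusAction : Prop :=
  (∀ (g : PSL2C) (x y : PBall), hdist (g • x) (g • y) = hdist x y) ∧
  (∀ g : PSL2C, (fun x : PBall => g • x) '' Sph = Sph) ∧
  (∀ g : PSL2C, Continuous fun x : PBall => g • x) ∧
  (∀ g : PSL2C, (∀ x : PBall, g • x = x) → g = 1)

/-- The orbit of the origin under a subgroup `G ≤ PSL(2,ℂ)`. -/
def orbitSet (G : Subgroup PSL2C) : Set PBall := {x | ∃ g ∈ G, g • origin = x}

/-- The limit set `Λ_G`: the accumulation points on `S²∞` of the orbit of the origin. -/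
def limitSet (G : Subgroup PSL2C) : Set PBall := closure (orbitSet G) ∩ Sph

/-- The domain of discontinuity `Ω_G = S²∞ ∖ Λ_G`. -/
def domDisc (G : Subgroup PSL2C) : Set PBall := Sph \ limitSet G

/-- Proper discontinuity of the action of `G` on the open ball `ℍ³` (equivalent to
discreteness of `G` in `PSL(2,ℂ)`). -/
def ProperlyDiscontinuous (G : Subgroup PSL2C) : Prop :=
  ∀ K : Set PBall, IsCompact K → Disjoint K Sph →
    {g : PSL2C | g ∈ G ∧ ((fun x : PBall => g • x) '' K ∩ K).Nonempty}.Finite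

/-- A Kleinian group: a discrete, torsion-free, finitely generated subgroup of
`PSL(2,ℂ)`. -/
def IsKleinian (G : Subgroup PSL2C) : Prop :=
  Group.FG G ∧ (∀ g : G, g ≠ 1 → ¬IsOfFinOrder g) ∧ ProperlyDiscontinuous G

/-- Summability of the Poincaré series `g_s(o,o) = Σ_{g∈G} e^{-s d(o, g·o)}`. -/
def PoincareSummable (G : Subgroup PSL2C) (s : ℝ) : Prop :=
  Summable fun g : G => Real.exp (-s * hdist origin ((g : PSL2C) • origin))

/-- The critical exponent `δ_G` of `G`: the abscissa of convergence of the Poincaré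
series. -/
def critExp (G : Subgroup PSL2C) : ℝ := sInf {s : ℝ | 0 ≤ s ∧ PoincareSummable G s}

/-- `G` is of divergence type: the Poincaré series diverges at `s = δ_G`. -/
def DivergenceType (G : Subgroup PSL2C) : Prop := ¬ PoincareSummable G (critExp G)

/-- `G` is non-elementary: its limit set has more than two points. -/
def NonElementary (G : Subgroup PSL2C) : Prop :=
  ∃ a b c : PBall, a ∈ limitSet G ∧ b ∈ limitSet G ∧ c ∈ limitSet G ∧
    a ≠ b ∧ a ≠ c ∧ b ≠ c

/-- The conical limit set `Λ_{G,c}`: points of `Λ_G` approached by infinitely many orbit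
points lying within a bounded hyperbolic distance of the geodesic ray from the origin
to the point. -/
def conicalLimitSet (G : Subgroup PSL2C) : Set PBall :=
  {ξ | ξ ∈ limitSet G ∧ ∃ C : ℝ,
    {g : PSL2C | g ∈ G ∧ ∃ t ∈ Set.Ico (0 : ℝ) 1,
      hdist (g • origin) (segPt ξ t) ≤ C}.Infinite}

/-- A parabolic element: a nontrivial element with exactly one fixed point on `S²∞`. -/
def IsParabolic (g : PSL2C) : Prop :=
  g ≠ 1 ∧ ∃! ξ : PBall, ξ ∈ Sph ∧ g • ξ = ξ

/-- A bounded parabolic fixed point of `G`: a parabolic fixed point whose stabiliser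
acts cocompactly on `Λ_G` minus the point. -/
def IsBoundedParabolicPt (G : Subgroup PSL2C) (p : PBall) : Prop :=
  (∃ g ∈ G, IsParabolic g ∧ g • p = p) ∧
  ∃ K : Set PBall, IsCompact K ∧ K ⊆ limitSet G \ {p} ∧
    ∀ x ∈ limitSet G \ {p}, ∃ g ∈ G, g • p = p ∧ x ∈ (fun y : PBall => g • y) '' K

/-- Geometric finiteness (in the Beardon–Maskit/Bowditch form: every limit point is
conical or a bounded parabolic fixed point). -/
def GeometricallyFinite (G : Subgroup PSL2C) : Prop :=
  limitSet G ⊆ conicalLimitSet G ∪ {p | IsBoundedParabolicPt G p}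

/-- `G` is minimally parabolic: every parabolic element of `G` lies in a rank-two free
abelian subgroup of `G`. -/
def MinimallyParabolic (G : Subgroup PSL2C) : Prop :=
  ∀ g ∈ G, IsParabolic g →
    ∃ A : Subgroup PSL2C, A ≤ G ∧ g ∈ A ∧ Nonempty (A ≃* Multiplicative (ℤ × ℤ))

/-- The Busemann function `b_{o,ξ}(y)` of the ball model, normalised so that
`b_{o,ξ}(o) = 0`. -/
def busemann (ξ y : PBall) : ℝ :=
  Real.log (‖(ξ : E3) - (y : E3)‖ ^ 2 / (1 - ‖(y : E3)‖ ^ 2))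

/-- `μ` is a conformal measure of dimension `s` for `G` based at `x`: a finite nonzero
measure supported on `Λ_G`, quasi-invariant under `G` with Radon–Nikodym cocycle
`e^{-s·b}` given by the Busemann cocycle. -/
def IsConformalMeasure (G : Subgroup PSL2C) (x : PBall) (s : ℝ) (μ : Measure PBall) :
    Prop :=
  IsFiniteMeasure μ ∧ μ ≠ 0 ∧ μ ((limitSet G)ᶜ) = 0 ∧
  ∀ g ∈ G, ∀ A : Set PBall, MeasurableSet A →
    μ ((fun ξ : PBall => g • ξ) '' A) =
      ∫⁻ ξ in A,
        ENNReal.ofReal (Real.exp (-s * (busemann ξ (g⁻¹ • x) - busemann ξ x))) ∂μ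

/-- The Patterson–Sullivan measure of `G` based at `x`: a conformal measure of dimension
the critical exponent `δ_G`. -/
def IsPattersonSullivan (G : Subgroup PSL2C) (x : PBall) (μ : Measure PBall) : Prop :=
  IsConformalMeasure G x (critExp G) μ

/-- `ρ` represents a point of the deformation space `D(F)`: a faithful discrete
representation of `F` in `PSL(2,ℂ)` (with torsion-free finitely generated image). -/
def InDeformationSpace (F : Subgroup PSL2C) (ρ : F →* PSL2C) : Prop :=
  Function.Injective ρ ∧ IsKleinian ρ.range

/-- There is a homeomorphism from `ℍ³/F` to `ℍ³/ρ(F)` inducing `ρ` between the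
fundamental groups; equivalently, there is a `ρ`-equivariant homeomorphism between the
open balls. -/
def InducedByHomeo (F : Subgroup PSL2C) (ρ : F →* PSL2C) : Prop :=
  ∃ Φ Ψ : PBall → PBall,
    ContinuousOn Φ Sphᶜ ∧ MapsTo Φ Sphᶜ Sphᶜ ∧
    ContinuousOn Ψ Sphᶜ ∧ MapsTo Ψ Sphᶜ Sphᶜ ∧
    (∀ x ∈ (Sphᶜ : Set PBall), Ψ (Φ x) = x ∧ Φ (Ψ x) = x) ∧
    ∀ (f : F), ∀ x ∈ (Sphᶜ : Set PBall), Φ ((f : PSL2C) • x) = ρ f • Φ x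

/-- `ι` is the Cannon–Thurston map of `ρ ∈ D(F)`: the continuous `ρ`-equivariant
extension to `Λ_F` of the orbit map `F·o → ρ(F)·o`, mapping `Λ_F` onto `Λ_{ρ(F)}`. -/
def IsCannonThurston (F : Subgroup PSL2C) (ρ : F →* PSL2C) (ι : PBall → PBall) : Prop :=
  MapsTo ι (limitSet F) (limitSet ρ.range) ∧
  SurjOn ι (limitSet F) (limitSet ρ.range) ∧
  ContinuousOn ι (limitSet F) ∧
  (∀ (f : F), ∀ ξ ∈ limitSet F, ι ((f : PSL2C) • ξ) = ρ f • ι ξ) ∧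
  ∀ (σ : ℕ → F), ∀ ξ ∈ limitSet F,
    Tendsto (fun n => (σ n : PSL2C) • origin) atTop (𝓝 ξ) →
    Tendsto (fun n => (ρ (σ n) : PSL2C) • origin) atTop (𝓝 (ι ξ))

/-- `S^{(2)}`: the set of pairs of distinct points of `S`. -/
def pairSet (S : Set PBall) : Set (PBall × PBall) :=
  {p | p.1 ∈ S ∧ p.2 ∈ S ∧ p.1 ≠ p.2}

/-- `End_S(ι) = {(ξ₁,ξ₂) ∈ S^{(2)} : ι ξ₁ = ι ξ₂}`. -/
def EndPairs (S : Set PBall) (ι : PBall → PBall) : Set (PBall × PBall) :=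
  {p | p ∈ pairSet S ∧ ι p.1 = ι p.2}

/-- `end_S(ι) = proj₁(End_S(ι))`. -/
def endSet (S : Set PBall) (ι : PBall → PBall) : Set PBall :=
  Prod.fst '' EndPairs S ι

end Setting

/-!
Suppose `ξ = î a = î b` with `a ≠ b` were conical, witnessed by `gₖ ∈ ρ(F)` with `gₖ • o` within
`C` of the ray `[o, ξ)`. Translated by `gₖ⁻¹`, the ray becomes a geodesic from `gₖ⁻¹ • o`, which
tends to `S²∞`, through a point of the hyperbolic ball of radius `C` about `o`, to `gₖ⁻¹ • ξ`;
hence `gₖ⁻¹ • ξ` stays a definite Euclidean distance away from `gₖ⁻¹ • o`. On the other hand,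
writing `gₖ⁻¹ = ρ fₖ`, the escaping elements `fₖ` of `F` collapse one of `a`, `b`, say `c`, onto
the limit `w` of `fₖ • o` (along a subsequence), so by continuity and equivariance of `î` both
`gₖ⁻¹ • ξ = î (fₖ • c)` and `gₖ⁻¹ • o` converge to `î w`. Both Euclidean estimates come from the
Möbius invariance of the visual metric seen from a point.
-/

def oneSubNormSq (x : PBall) : ℝ := 1 - ‖(x : E3)‖ ^ 2

section Ball

lemma norm_coe_le_one (x : PBall) : ‖(x : E3)‖ ≤ 1 :=
  mem_closedBall_zero_iff.1 x.2

lemma dist_origin (x : PBall) : dist x origin = ‖(x : E3)‖ := by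
  rw [Subtype.dist_eq, dist_eq_norm]
  exact congrArg norm (sub_zero _)

lemma dist_le_two (x y : PBall) : dist x y ≤ 2 := by
  rw [Subtype.dist_eq, dist_eq_norm]
  linarith [norm_sub_le (x : E3) y, norm_coe_le_one x, norm_coe_le_one y]

lemma oneSubNormSq_nonneg (x : PBall) : 0 ≤ oneSubNormSq x := by
  have := norm_coe_le_one x
  unfold oneSubNormSq; nlinarith [norm_nonneg (x : E3)]

lemma oneSubNormSq_le_one (x : PBall) : oneSubNormSq x ≤ 1 := by
  unfold oneSubNormSq; nlinarith [norm_nonneg (x : E3)]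

@[simp]
lemma oneSubNormSq_origin : oneSubNormSq origin = 1 := by
  simp [oneSubNormSq, origin]

lemma oneSubNormSq_eq_zero_iff {x : PBall} : oneSubNormSq x = 0 ↔ x ∈ Sph := by
  rw [oneSubNormSq, sub_eq_zero, eq_comm, pow_eq_one_iff_of_nonneg (norm_nonneg _) two_ne_zero]
  rfl

lemma oneSubNormSq_pos_iff {x : PBall} : 0 < oneSubNormSq x ↔ x ∉ Sph := by
  rw [← oneSubNormSq_eq_zero_iff, (oneSubNormSq_nonneg x).lt_iff_ne, ne_comm]

@[fun_prop]
lemma continuous_oneSubNormSq : Continuous oneSubNormSq := by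
  unfold oneSubNormSq; fun_prop

lemma oneSubNormSq_sub_oneSubNormSq_le (x y : PBall) :
    oneSubNormSq x - oneSubNormSq y ≤ 2 * dist x y := by
  have hxy : ‖(y : E3)‖ - ‖(x : E3)‖ ≤ dist x y := by
    rw [Subtype.dist_eq, dist_eq_norm']; exact norm_sub_norm_le _ _
  have := norm_coe_le_one x
  have := norm_coe_le_one y
  unfold oneSubNormSq
  nlinarith [norm_nonneg (x : E3), norm_nonneg (y : E3), dist_nonneg (x := x) (y := y)]

lemma coe_segPt (ξ : PBall) {t : ℝ} (ht : t ∈ Icc 0 1) : (segPt ξ t : E3) = t • (ξ : E3) := by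
  simp [segPt, min_eq_left ht.2, max_eq_right ht.1]

lemma continuous_segPt (ξ : PBall) : Continuous (segPt ξ) :=
  ((continuous_const.max (continuous_id.min continuous_const)).smul continuous_const).subtype_mk _

lemma segPt_one (ξ : PBall) : segPt ξ 1 = ξ :=
  Subtype.ext <| by rw [coe_segPt ξ ⟨zero_le_one, le_rfl⟩, one_smul]

lemma segPt_notMem_Sph (ξ : PBall) {t : ℝ} (ht : t ∈ Ico 0 1) : segPt ξ t ∉ Sph := by
  have : ‖(segPt ξ t : E3)‖ < 1 := by
    rw [coe_segPt ξ ⟨ht.1, ht.2.le⟩, norm_smul, Real.norm_of_nonneg ht.1]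
    nlinarith [mul_le_mul_of_nonneg_left (norm_coe_le_one ξ) ht.1, ht.2]
  exact this.ne

lemma dense_compl_Sph : Dense (Sphᶜ : Set PBall) := by
  intro ξ
  have hlim : Tendsto (segPt ξ) (𝓝[<] 1) (𝓝 ξ) := by
    simpa only [segPt_one] using ((continuous_segPt ξ).tendsto 1).mono_left nhdsWithin_le_nhds
  refine mem_closure_of_tendsto hlim ?_
  filter_upwards [Ioo_mem_nhdsLT (zero_lt_one' ℝ)] with t ht
  exact segPt_notMem_Sph ξ ⟨ht.1.le, ht.2⟩

variable {ξ : PBall} {t : ℝ}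

lemma dist_segPt_origin (hξ : ξ ∈ Sph) (ht : t ∈ Icc 0 1) : dist (segPt ξ t) origin = t := by
  rw [dist_origin, coe_segPt ξ ht, norm_smul, Real.norm_of_nonneg ht.1, hξ.out, mul_one]

lemma dist_self_segPt (hξ : ξ ∈ Sph) (ht : t ∈ Icc 0 1) : dist ξ (segPt ξ t) = 1 - t := by
  have : (ξ : E3) - t • (ξ : E3) = (1 - t) • (ξ : E3) := by rw [sub_smul, one_smul]
  rw [Subtype.dist_eq, dist_eq_norm, coe_segPt ξ ht, this, norm_smul,
    Real.norm_of_nonneg (by linarith [ht.2]), hξ.out, mul_one]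

lemma oneSubNormSq_segPt (hξ : ξ ∈ Sph) (ht : t ∈ Icc 0 1) :
    oneSubNormSq (segPt ξ t) = 1 - t ^ 2 := by
  rw [oneSubNormSq, ← dist_origin, dist_segPt_origin hξ ht]

end Ball

lemma hdist_eq_arcosh (x y : PBall) :
    hdist x y = Real.arcosh (1 + 2 * dist x y ^ 2 / (oneSubNormSq x * oneSubNormSq y)) := by
  rw [Subtype.dist_eq, dist_eq_norm]; rfl

lemma one_le_one_add_two_mul_div (x y : PBall) :
    1 ≤ 1 + 2 * dist x y ^ 2 / (oneSubNormSq x * oneSubNormSq y) := by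
  have := oneSubNormSq_nonneg x
  have := oneSubNormSq_nonneg y
  have : 0 ≤ 2 * dist x y ^ 2 / (oneSubNormSq x * oneSubNormSq y) := by positivity
  linarith

lemma cosh_hdist (x y : PBall) :
    Real.cosh (hdist x y) = 1 + 2 * dist x y ^ 2 / (oneSubNormSq x * oneSubNormSq y) := by
  rw [hdist_eq_arcosh, Real.cosh_arcosh (one_le_one_add_two_mul_div x y)]

lemma hdist_nonneg (x y : PBall) : 0 ≤ hdist x y := by
  rw [hdist_eq_arcosh]; exact Real.arcosh_nonneg (one_le_one_add_two_mul_div x y)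

lemma two_div_one_add_cosh_le_oneSubNormSq {q : PBall} {C : ℝ} (hq : q ∉ Sph)
    (hC : hdist origin q ≤ C) : 2 / (1 + Real.cosh C) ≤ oneSubNormSq q := by
  have hpos := oneSubNormSq_pos_iff.2 hq
  have hcosh : Real.cosh (hdist origin q) ≤ Real.cosh C := by
    rw [Real.cosh_le_cosh, abs_of_nonneg (hdist_nonneg _ _)]
    exact hC.trans (le_abs_self C)
  rw [cosh_hdist, oneSubNormSq_origin, one_mul, dist_comm, dist_origin] at hcosh
  have hq2 : ‖(q : E3)‖ ^ 2 = 1 - oneSubNormSq q := by unfold oneSubNormSq; ring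
  rw [hq2] at hcosh
  field_simp at hcosh
  rw [div_le_iff₀ (by positivity)]
  linarith

namespace IsMobiusAction

variable [MulAction PSL2C PBall]

lemma smul_mem_Sph (hact : IsMobiusAction) (g : PSL2C) {x : PBall} (hx : x ∈ Sph) :
    g • x ∈ Sph :=
  hact.2.1 g ▸ mem_image_of_mem _ hx

lemma smul_mem_Sph_iff (hact : IsMobiusAction) (g : PSL2C) {x : PBall} :
    g • x ∈ Sph ↔ x ∈ Sph :=
  ⟨fun h => by simpa using hact.smul_mem_Sph g⁻¹ h, hact.smul_mem_Sph g⟩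

lemma dist_smul_sq_mul (hact : IsMobiusAction) (g : PSL2C) (x y : PBall) :
    dist (g • x) (g • y) ^ 2 * (oneSubNormSq x * oneSubNormSq y) =
      dist x y ^ 2 * (oneSubNormSq (g • x) * oneSubNormSq (g • y)) := by
  by_cases hSph : x ∈ Sph ∨ y ∈ Sph
  · rcases hSph with h | h <;>
      simp [oneSubNormSq_eq_zero_iff.2, h, hact.smul_mem_Sph g h]
  obtain ⟨hx, hy⟩ := not_or.1 hSph
  have hgx := oneSubNormSq_pos_iff.2 ((hact.smul_mem_Sph_iff g).not.2 hx)
  have hgy := oneSubNormSq_pos_iff.2 ((hact.smul_mem_Sph_iff g).not.2 hy)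
  have := oneSubNormSq_pos_iff.2 hx
  have := oneSubNormSq_pos_iff.2 hy
  have hcosh := congrArg Real.cosh (hact.1 g x y)
  rw [cosh_hdist, cosh_hdist, add_right_inj, mul_div_assoc, mul_div_assoc,
    mul_right_inj' two_ne_zero, div_eq_div_iff (by positivity) (by positivity)] at hcosh
  exact hcosh

/-- Möbius invariance of the visual metric `dist w z * (1 - ‖u‖²) / (dist w u * dist z u)`
seen from `u`, with denominators cleared. -/
lemma visual_identity (hact : IsMobiusAction) (g : PSL2C) (u w z : PBall) :
    dist w z * dist (g • w) (g • u) * dist (g • z) (g • u) * oneSubNormSq u =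
      dist w u * dist z u * dist (g • w) (g • z) * oneSubNormSq (g • u) := by
  have hg : Continuous fun x : PBall => g • x := hact.2.2.1 g
  suffices (fun p : PBall × PBall =>
      dist p.1 p.2 * dist (g • p.1) (g • u) * dist (g • p.2) (g • u) * oneSubNormSq u) =
      fun p => dist p.1 u * dist p.2 u * dist (g • p.1) (g • p.2) * oneSubNormSq (g • u) from
    congrFun this (w, z)
  refine Continuous.ext_on (dense_compl_Sph.prod dense_compl_Sph) (by fun_prop) (by fun_prop) ?_
  rintro ⟨w, z⟩ ⟨hw, hz⟩
  have hw' := oneSubNormSq_pos_iff.2 hw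
  have hz' := oneSubNormSq_pos_iff.2 hz
  have := oneSubNormSq_nonneg u
  have := oneSubNormSq_nonneg (g • u)
  refine (pow_left_inj₀ (by positivity) (by positivity) two_ne_zero).1 ?_
  refine mul_right_cancel₀ (mul_pos hw' hz').ne' ?_
  have e₁ := hact.dist_smul_sq_mul g w u
  have e₂ := hact.dist_smul_sq_mul g z u
  have e₃ := hact.dist_smul_sq_mul g w z
  linear_combination
    (dist w z ^ 2 * dist (g • z) (g • u) ^ 2 * oneSubNormSq z * oneSubNormSq u) * e₁ +
    (dist w z ^ 2 * dist w u ^ 2 * oneSubNormSq (g • w) * oneSubNormSq (g • u)) * e₂ -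
    (dist w u ^ 2 * dist z u ^ 2 * oneSubNormSq (g • u) ^ 2) * e₃

lemma dist_mul_dist_smul_origin_mul_dist_smul_origin_le (hact : IsMobiusAction) (h : PSL2C)
    {a b : PBall} (ha : a ∈ Sph) (hb : b ∈ Sph) :
    dist a b * dist (h • a) (h • origin) * dist (h • b) (h • origin) ≤
      2 * oneSubNormSq (h • origin) := by
  have key := hact.visual_identity h origin a b
  rw [oneSubNormSq_origin, mul_one, dist_origin, dist_origin, ha.out, hb.out, one_mul,
    one_mul] at key
  rw [key]
  exact mul_le_mul_of_nonneg_right (dist_le_two _ _) (oneSubNormSq_nonneg _)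

lemma oneSubNormSq_mul_sub_le (hact : IsMobiusAction) (g : PSL2C) {ξ : PBall} (hξ : ξ ∈ Sph)
    {t : ℝ} (ht : t ∈ Ico 0 1) :
    oneSubNormSq (g • segPt ξ t) * (oneSubNormSq (g • segPt ξ t) - oneSubNormSq (g • origin)) ≤
      4 * dist (g • ξ) (g • origin) := by
  set q := g • segPt ξ t
  have ht' : t ∈ Icc 0 1 := ⟨ht.1, ht.2.le⟩
  have key := hact.visual_identity g (segPt ξ t) ξ origin
  rw [dist_origin, hξ.out, dist_comm origin, dist_segPt_origin hξ ht', dist_self_segPt hξ ht',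
    oneSubNormSq_segPt hξ ht'] at key
  have key' : dist (g • ξ) q * dist (g • origin) q * (1 + t) =
      t * dist (g • ξ) (g • origin) * oneSubNormSq q := by
    refine mul_left_cancel₀ (sub_pos.2 ht.2).ne' ?_
    linear_combination key
  have hξq : oneSubNormSq q ≤ 2 * dist (g • ξ) q := by
    simpa [oneSubNormSq_eq_zero_iff.2 (hact.smul_mem_Sph g hξ), dist_comm] using
      oneSubNormSq_sub_oneSubNormSq_le q (g • ξ)
  have hoq := oneSubNormSq_sub_oneSubNormSq_le q (g • origin)
  have hq₀ := oneSubNormSq_nonneg q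
  have hq₁ := oneSubNormSq_le_one q
  rw [dist_comm q] at hoq
  calc oneSubNormSq q * (oneSubNormSq q - oneSubNormSq (g • origin))
      ≤ (2 * dist (g • ξ) q) * (2 * dist (g • origin) q) :=
        (mul_le_mul_of_nonneg_left hoq hq₀).trans
          (mul_le_mul_of_nonneg_right hξq (by positivity))
    _ ≤ 4 * (dist (g • ξ) q * dist (g • origin) q * (1 + t)) := by
        nlinarith [mul_nonneg (mul_nonneg (dist_nonneg (x := g • ξ) (y := q))
          (dist_nonneg (x := g • origin) (y := q))) ht.1]
    _ ≤ 4 * dist (g • ξ) (g • origin) := by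
        rw [key']
        nlinarith [mul_le_one₀ ht.2.le hq₀ hq₁, mul_nonneg ht.1 hq₀,
          dist_nonneg (x := g • ξ) (y := g • origin)]

lemma conical_separation (hact : IsMobiusAction) {g : PSL2C} {ξ : PBall} (hξ : ξ ∈ Sph)
    {t C : ℝ} (ht : t ∈ Ico 0 1) (hC : hdist (g • origin) (segPt ξ t) ≤ C) :
    2 / (1 + Real.cosh C) * (2 / (1 + Real.cosh C) - oneSubNormSq (g⁻¹ • origin)) ≤
      4 * dist (g⁻¹ • ξ) (g⁻¹ • origin) := by
  have hq : 2 / (1 + Real.cosh C) ≤ oneSubNormSq (g⁻¹ • segPt ξ t) := by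
    refine two_div_one_add_cosh_le_oneSubNormSq
      ((hact.smul_mem_Sph_iff g⁻¹).not.2 (segPt_notMem_Sph ξ ht)) ?_
    rwa [← hact.1 g, smul_inv_smul]
  have hβ : 0 < 2 / (1 + Real.cosh C) := by positivity
  have key := hact.oneSubNormSq_mul_sub_le g⁻¹ hξ ht
  by_cases hp : oneSubNormSq (g⁻¹ • origin) ≤ 2 / (1 + Real.cosh C)
  · nlinarith
  · nlinarith [dist_nonneg (x := g⁻¹ • ξ) (y := g⁻¹ • origin)]

lemma smul_mem_limitSet (hact : IsMobiusAction) {H : Subgroup PSL2C} {g : PSL2C} (hg : g ∈ H)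
    {z : PBall} (hz : z ∈ limitSet H) : g • z ∈ limitSet H := by
  refine ⟨?_, hact.smul_mem_Sph g hz.2⟩
  have horbit : MapsTo (g • ·) (orbitSet H) (orbitSet H) := by
    rintro _ ⟨g', hg', rfl⟩
    exact ⟨g * g', H.mul_mem hg hg', mul_smul _ _ _⟩
  exact map_mem_closure (hact.2.2.1 g) hz.1 horbit

lemma exists_collapsing_subseq (hact : IsMobiusAction) {h : ℕ → PSL2C}
    (hh : Tendsto (fun k => oneSubNormSq (h k • origin)) atTop (𝓝 0)) {a b : PBall}
    (ha : a ∈ Sph) (hb : b ∈ Sph) (hab : a ≠ b) :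
    ∃ φ : ℕ → ℕ, StrictMono φ ∧ ∃ w, ∃ c ∈ ({a, b} : Set PBall),
      Tendsto (fun k => h (φ k) • origin) atTop (𝓝 w) ∧
      Tendsto (fun k => h (φ k) • c) atTop (𝓝 w) := by
  obtain ⟨⟨w, a', b'⟩, -, φ, hφ, hlim⟩ := isCompact_univ.tendsto_subseq
    (x := fun k => (h k • origin, h k • a, h k • b)) fun _ => mem_univ _
  have ho := (continuous_fst.tendsto _).comp hlim
  have ha' := ((continuous_fst.comp continuous_snd).tendsto _).comp hlim
  have hb' := ((continuous_snd.comp continuous_snd).tendsto _).comp hlim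
  have hprod : dist a b * dist a' w * dist b' w ≤ 2 * 0 :=
    le_of_tendsto_of_tendsto' ((tendsto_const_nhds.mul (ha'.dist ho)).mul (hb'.dist ho))
      ((hh.comp hφ.tendsto_atTop).const_mul 2)
      fun k => hact.dist_mul_dist_smul_origin_mul_dist_smul_origin_le (h (φ k)) ha hb
  have hab' : 0 < dist a b := dist_pos.2 hab
  rcases le_or_gt (dist a' w) 0 with ha'w | ha'w
  · exact ⟨φ, hφ, w, a, mem_insert _ _, ho, dist_le_zero.1 ha'w ▸ ha'⟩
  · have : dist b' w ≤ 0 := by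
      by_contra! hb'w
      linarith [mul_pos (mul_pos hab' ha'w) hb'w]
    exact ⟨φ, hφ, w, b, mem_insert_of_mem _ rfl, ho, dist_le_zero.1 this ▸ hb'⟩

end IsMobiusAction

lemma tendsto_oneSubNormSq_smul_origin [MulAction PSL2C PBall] {H : Subgroup PSL2C}
    (hH : ProperlyDiscontinuous H) {e : ℕ → PSL2C} (he : Function.Injective e)
    (heH : ∀ k, e k ∈ H) : Tendsto (fun k => oneSubNormSq (e k • origin)) atTop (𝓝 0) := by
  refine tendsto_order.2 ⟨fun a ha => .of_forall fun k => ha.trans_le (oneSubNormSq_nonneg _),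
    fun ε hε => ?_⟩
  set K := {x : PBall | min ε 1 ≤ oneSubNormSq x}
  have hK : IsCompact K := (isClosed_le continuous_const continuous_oneSubNormSq).isCompact
  have hKS : Disjoint K Sph := disjoint_left.2 fun x hx hxS => by
    have : min ε 1 ≤ 0 := oneSubNormSq_eq_zero_iff.2 hxS ▸ hx
    exact (lt_min hε one_pos).not_ge this
  rw [← Nat.cofinite_eq_atTop]
  refine ((hH K hK hKS).preimage he.injOn).eventually_cofinite_notMem.mono fun k hk => ?_
  by_contra! hεk
  exact hk ⟨heH k, e k • origin, ⟨origin, by simp [K], rfl⟩, (min_le_left _ _).trans hεk⟩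

lemma mem_limitSet_of_tendsto [MulAction PSL2C PBall] {H : Subgroup PSL2C} {h : ℕ → PSL2C}
    {w : PBall} (hH : ∀ k, h k ∈ H)
    (hh : Tendsto (fun k => oneSubNormSq (h k • origin)) atTop (𝓝 0))
    (hw : Tendsto (fun k => h k • origin) atTop (𝓝 w)) : w ∈ limitSet H :=
  ⟨mem_closure_of_tendsto hw (.of_forall fun k => ⟨h k, hH k, rfl⟩),
    oneSubNormSq_eq_zero_iff.1 <|
      tendsto_nhds_unique ((continuous_oneSubNormSq.tendsto w).comp hw) hh⟩

lemma exists_injective_seq_of_mem_conicalLimitSet [MulAction PSL2C PBall]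
    {G : Subgroup PSL2C} {ξ : PBall} (hξ : ξ ∈ conicalLimitSet G) :
    ∃ C : ℝ, ∃ g : ℕ → PSL2C, Function.Injective g ∧ (∀ k, g k ∈ G) ∧ ∃ t : ℕ → ℝ,
      ∀ k, t k ∈ Ico 0 1 ∧ hdist (g k • origin) (segPt ξ (t k)) ≤ C := by
  obtain ⟨-, C, hC⟩ := hξ
  choose t ht using fun k => (hC.natEmbedding _ k).2.2
  exact ⟨C, fun k => hC.natEmbedding _ k,
    Subtype.val_injective.comp (hC.natEmbedding _).injective,
    fun k => (hC.natEmbedding _ k).2.1, t, ht⟩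

lemma IsCannonThurston.tendsto_dist_smul [MulAction PSL2C PBall] (hact : IsMobiusAction)
    {F : Subgroup PSL2C} {ρ : F →* PSL2C} {ι : PBall → PBall} (hCT : IsCannonThurston F ρ ι)
    {f : ℕ → F} {c w : PBall} (hc : c ∈ limitSet F) (hw : w ∈ limitSet F)
    (hfo : Tendsto (fun k => (f k : PSL2C) • origin) atTop (𝓝 w))
    (hfc : Tendsto (fun k => (f k : PSL2C) • c) atTop (𝓝 w)) :
    Tendsto (fun k => dist (ρ (f k) • ι c) (ρ (f k) • origin)) atTop (𝓝 0) := by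
  have hι : Tendsto (fun k => ι ((f k : PSL2C) • c)) atTop (𝓝 (ι w)) :=
    (hCT.2.2.1 w hw).tendsto.comp <| tendsto_nhdsWithin_iff.2
      ⟨hfc, .of_forall fun k => hact.smul_mem_limitSet (f k).2 hc⟩
  simpa [hCT.2.2.2.1 _ c hc] using hι.dist (hCT.2.2.2.2 f w hw hfo)

theorem noninjective_point_is_not_conical_general
    [MulAction PSL2C PBall] (hact : IsMobiusAction)
    (F : Subgroup PSL2C) (hF : IsKleinian F)
    (ρ : F →* PSL2C) (hρ : InDeformationSpace F ρ)
    (ihat : PBall → PBall) (hCT : IsCannonThurston F ρ ihat)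
    (ξ : PBall)
    (hfibre : ∃ a b : PBall, a ∈ limitSet F ∧ b ∈ limitSet F ∧ a ≠ b ∧
      ihat a = ξ ∧ ihat b = ξ) :
    ξ ∉ conicalLimitSet ρ.range := by
  intro hξ
  obtain ⟨C, g, hg_inj, hgG, t, hgt⟩ := exists_injective_seq_of_mem_conicalLimitSet hξ
  obtain ⟨a, b, ha, hb, hab, rfl, hba⟩ := hfibre
  choose f hf using fun k => ρ.mem_range.1 (ρ.range.inv_mem (hgG k))
  have hf_inj : Function.Injective fun k => (f k : PSL2C) := fun k l hkl =>
    hg_inj <| inv_injective <| by rw [← hf, ← hf, Subtype.ext hkl]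
  have hF_esc := tendsto_oneSubNormSq_smul_origin hF.2.2 hf_inj fun k => (f k).2
  have hG_esc := tendsto_oneSubNormSq_smul_origin hρ.2.2.2 (inv_injective.comp hg_inj)
    fun k => ρ.range.inv_mem (hgG k)
  obtain ⟨φ, hφ, w, c, hc, hwo, hwc⟩ := hact.exists_collapsing_subseq hF_esc ha.2 hb.2 hab
  have hw := mem_limitSet_of_tendsto (fun k => (f (φ k)).2) (hF_esc.comp hφ.tendsto_atTop) hwo
  have hcF : c ∈ limitSet F ∧ ihat c = ihat a := by
    rcases hc with rfl | rfl
    exacts [⟨ha, rfl⟩, ⟨hb, hba⟩]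
  have hcollapse := hCT.tendsto_dist_smul hact hcF.1 hw hwo hwc
  simp only [hf, hcF.2] at hcollapse
  set β := 2 / (1 + Real.cosh C)
  have hβ : 0 < β := by positivity
  have hβ2 : β * (β - 0) ≤ 4 * 0 :=
    le_of_tendsto_of_tendsto' (tendsto_const_nhds.mul (tendsto_const_nhds.sub
      (hG_esc.comp hφ.tendsto_atTop))) (hcollapse.const_mul 4)
      fun k => hact.conical_separation hξ.1.2 (hgt (φ k)).1 (hgt (φ k)).2
  nlinarith

/-- **Lemma 4.1 (Jeon–Ohshika).** Let `F` be a minimally parabolic geometrically finite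
Kleinian group, `(G,ρ) ∈ D(F)` and `î : Λ_F → Λ_G` the Cannon–Thurston map. If the
fibre `î⁻¹(ξ)` of a point `ξ ∈ Λ_G` contains more than one point, then `ξ` is not a
conical limit point of `G`. -/
theorem noninjective_point_is_not_conical
    [MulAction PSL2C PBall] (hact : IsMobiusAction)
    (F : Subgroup PSL2C) (hF : IsKleinian F) (hFgf : GeometricallyFinite F)
    (hFmp : MinimallyParabolic F)
    (ρ : F →* PSL2C) (hρ : InDeformationSpace F ρ)
    (ihat : PBall → PBall) (hCT : IsCannonThurston F ρ ihat)
    (ξ : PBall)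
    (hfibre : ∃ a b : PBall, a ∈ limitSet F ∧ b ∈ limitSet F ∧ a ≠ b ∧
      ihat a = ξ ∧ ihat b = ξ) :
    ξ ∉ conicalLimitSet ρ.range :=
  noninjective_point_is_not_conical_general hact F hF ρ hρ ihat hCT ξ hfibre
end
end

section
/- In the setting of the lemma on End_F(G), let A and B be disjoint closed subsets of Λ_F, set 𝖠 := proj₁(End_F(G) ∩ (A × B)), and let Z₂ be the set of points a ∈ Λ_F such that î⁻¹(î(a)) has more than two points. Then the restriction of î to 𝖠 ∖ Z₂ is a homeomorphism onto its image. -/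
noncomputable section

open MeasureTheory Filter Topology Set

/-
The set `𝖠` is compact: it is the projection of the closed subset of
`A × B` on which the two coordinates have the same image under the continuous map `î`.
If `a ∈ 𝖠 ∖ Z₂` and `a' ∈ 𝖠` with `î a' = î a`, then `a'` has a partner `b' ∈ B` with
`î b' = î a'`; were `a' ≠ a`, the three distinct points `a, a', b'` would put `a` in `Z₂`.
So every fibre of `î|𝖠` through `𝖠 ∖ Z₂` is a single point, and a continuous map on a
compact set that is injective on such a saturated subset restricts to a closed, hence
homeomorphic, map onto its image.
-/

section FibreSaturated

variable {X Y : Type*} [TopologicalSpace X] [TopologicalSpace Y] [T2Space Y]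
  {f : X → Y} {K S : Set X}

theorem isClosedMap_imageFactorization_of_saturated (hK : IsCompact K)
    (hf : ContinuousOn f K) (hSK : S ⊆ K) (hsat : ∀ y ∈ K, f y ∈ f '' S → y ∈ S) :
    IsClosedMap (S.imageFactorization f) := by
  intro D hD
  obtain ⟨C, hC, rfl⟩ := isClosed_induced_iff.mp hD
  have himage : S.imageFactorization f '' (Subtype.val ⁻¹' C) =
      Subtype.val ⁻¹' (f '' (C ∩ K)) := by
    ext ⟨t, ht⟩
    constructor
    · rintro ⟨x, hxC, hxt⟩
      exact ⟨x, ⟨hxC, hSK x.2⟩, congrArg Subtype.val hxt⟩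
    · rintro ⟨y, ⟨hyC, hyK⟩, rfl⟩
      exact ⟨⟨y, hsat y hyK ht⟩, hyC, rfl⟩
  rw [himage]
  exact ((hK.inter_left hC).image_of_continuousOn
    (hf.mono inter_subset_right)).isClosed.preimage continuous_subtype_val

theorem exists_homeomorph_image_of_fibres_trivial (hK : IsCompact K) (hf : ContinuousOn f K)
    (hSK : S ⊆ K) (hfib : ∀ x ∈ S, ∀ y ∈ K, f y = f x → y = x) :
    ∃ e : S ≃ₜ f '' S, ∀ x : S, (e x : Y) = f x := by
  have hinj : InjOn f S := fun x hx y hy hxy => hfib y hy x (hSK hx) hxy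
  have hsat : ∀ y ∈ K, f y ∈ f '' S → y ∈ S := by
    rintro y hy ⟨x, hx, hxy⟩
    exact hfib x hx y hy hxy.symm ▸ hx
  exact ⟨(Equiv.ofBijective _ ⟨hinj.imageFactorization_injective,
      imageFactorization_surjective⟩).toHomeomorphOfContinuousClosed
    ((hf.mono hSK).domRestrict.subtype_mk _)
    (isClosedMap_imageFactorization_of_saturated hK hf hSK hsat), fun _ => rfl⟩

end FibreSaturated

section EndSet

variable {S A B : Set PBall} {ι : PBall → PBall}

/-- The set `𝖠 = proj₁(End_S(ι) ∩ (A × B))`. -/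
def endSetIn (S : Set PBall) (ι : PBall → PBall) (A B : Set PBall) : Set PBall :=
  Prod.fst '' (EndPairs S ι ∩ A ×ˢ B)

/-- The set `Z₂` of points `a ∈ S` such that `ι⁻¹(ι a) ∩ S` has more than two points. -/
def fibreGtTwo (S : Set PBall) (ι : PBall → PBall) : Set PBall :=
  {a : PBall | a ∈ S ∧ ∃ b c d : PBall, b ∈ S ∧ c ∈ S ∧ d ∈ S ∧
    b ≠ c ∧ b ≠ d ∧ c ≠ d ∧ ι b = ι a ∧ ι c = ι a ∧ ι d = ι a}

theorem endPairs_inter_prod_eq (hAB : Disjoint A B) (hAS : A ⊆ S) (hBS : B ⊆ S) :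
    EndPairs S ι ∩ A ×ˢ B = A ×ˢ B ∩ (fun p : PBall × PBall => (ι p.1, ι p.2)) ⁻¹'
      {q | q.1 = q.2} := by
  ext p
  constructor
  · rintro ⟨⟨-, heq⟩, hp⟩
    exact ⟨hp, heq⟩
  · rintro ⟨hp, heq⟩
    exact ⟨⟨⟨hAS hp.1, hBS hp.2, hAB.ne_of_mem hp.1 hp.2⟩, heq⟩, hp⟩

theorem isCompact_endSetIn (hι : ContinuousOn ι S) (hA : IsClosed A) (hB : IsClosed B)
    (hAB : Disjoint A B) (hAS : A ⊆ S) (hBS : B ⊆ S) : IsCompact (endSetIn S ι A B) := by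
  have hιAB : ContinuousOn (fun p : PBall × PBall => (ι p.1, ι p.2)) (A ×ˢ B) :=
    (hι.comp continuous_fst.continuousOn fun p hp => hAS hp.1).prodMk
      (hι.comp continuous_snd.continuousOn fun p hp => hBS hp.2)
  have hclosed : IsClosed (EndPairs S ι ∩ A ×ˢ B) := by
    rw [endPairs_inter_prod_eq hAB hAS hBS]
    exact hιAB.preimage_isClosed_of_isClosed (hA.prod hB) isClosed_diagonal
  exact hclosed.isCompact.image continuous_fst

theorem endSetIn_subset_left : endSetIn S ι A B ⊆ A := by
  rintro _ ⟨p, hp, rfl⟩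
  exact hp.2.1

theorem eq_of_mem_endSetIn_diff_fibreGtTwo (hAB : Disjoint A B) (hAS : A ⊆ S)
    (hBS : B ⊆ S) :
    ∀ a ∈ endSetIn S ι A B \ fibreGtTwo S ι, ∀ a' ∈ endSetIn S ι A B, ι a' = ι a → a' = a := by
  intro a ha a' ha' heq
  obtain ⟨haA, haZ⟩ := ha
  replace haA := endSetIn_subset_left haA
  obtain ⟨⟨a', b'⟩, ⟨⟨-, hb'⟩, ha'A, hb'B⟩, rfl⟩ := ha'
  by_contra hne
  exact haZ ⟨hAS haA, a, a', b', hAS haA, hAS ha'A, hBS hb'B, Ne.symm hne,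
    hAB.ne_of_mem haA hb'B, hAB.ne_of_mem ha'A hb'B, rfl, heq, hb'.symm.trans heq⟩

end EndSet

theorem restriction_to_A_minus_Z2_homeomorphism_general
    [MulAction PSL2C PBall]
    (F : Subgroup PSL2C)
    (ρ : F →* PSL2C)
    (ihat : PBall → PBall) (hCT : IsCannonThurston F ρ ihat)
    (A B : Set PBall) (hA : IsClosed A) (hB : IsClosed B) (hAB : Disjoint A B)
    (hAsub : A ⊆ limitSet F) (hBsub : B ⊆ limitSet F) :
    ∃ e : (Prod.fst '' (EndPairs (limitSet F) ihat ∩ A ×ˢ B) \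
          {a : PBall | a ∈ limitSet F ∧ ∃ b c d : PBall,
            b ∈ limitSet F ∧ c ∈ limitSet F ∧ d ∈ limitSet F ∧
            b ≠ c ∧ b ≠ d ∧ c ≠ d ∧
            ihat b = ihat a ∧ ihat c = ihat a ∧ ihat d = ihat a} : Set PBall) ≃ₜ
        (ihat '' (Prod.fst '' (EndPairs (limitSet F) ihat ∩ A ×ˢ B) \
          {a : PBall | a ∈ limitSet F ∧ ∃ b c d : PBall,
            b ∈ limitSet F ∧ c ∈ limitSet F ∧ d ∈ limitSet F ∧
            b ≠ c ∧ b ≠ d ∧ c ≠ d ∧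
            ihat b = ihat a ∧ ihat c = ihat a ∧ ihat d = ihat a}) : Set PBall),
      ∀ x : (Prod.fst '' (EndPairs (limitSet F) ihat ∩ A ×ˢ B) \
          {a : PBall | a ∈ limitSet F ∧ ∃ b c d : PBall,
            b ∈ limitSet F ∧ c ∈ limitSet F ∧ d ∈ limitSet F ∧
            b ≠ c ∧ b ≠ d ∧ c ≠ d ∧
            ihat b = ihat a ∧ ihat c = ihat a ∧ ihat d = ihat a} : Set PBall),
        (e x : PBall) = ihat x := by
  have hcont : ContinuousOn ihat (limitSet F) := hCT.2.2.1
  exact exists_homeomorph_image_of_fibres_trivial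
    (isCompact_endSetIn hcont hA hB hAB hAsub hBsub)
    (hcont.mono (endSetIn_subset_left.trans hAsub)) sdiff_subset
    (eq_of_mem_endSetIn_diff_fibreGtTwo hAB hAsub hBsub)

/-- **(From the proof of Lemma 4.4, Jeon–Ohshika.)** For disjoint closed subsets
`A, B ⊆ Λ_F`, letting `𝖠 := proj₁(End_F(G) ∩ (A × B))` and `Z₂` be the (countable) set
of points `a ∈ Λ_F` whose fibre `î⁻¹(î(a))` has more than two points, the restriction
of the Cannon–Thurston map `î` to `𝖠 ∖ Z₂` is a homeomorphism onto its image. -/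
theorem restriction_to_A_minus_Z2_homeomorphism
    [MulAction PSL2C PBall] (hact : IsMobiusAction)
    (F : Subgroup PSL2C) (hF : IsKleinian F) (hFgf : GeometricallyFinite F)
    (hFmp : MinimallyParabolic F) (hFne : NonElementary F)
    (ρ : F →* PSL2C) (hρ : InDeformationSpace F ρ)
    (ihat : PBall → PBall) (hCT : IsCannonThurston F ρ ihat)
    (A B : Set PBall) (hA : IsClosed A) (hB : IsClosed B) (hAB : Disjoint A B)
    (hAsub : A ⊆ limitSet F) (hBsub : B ⊆ limitSet F) :
    ∃ e : (Prod.fst '' (EndPairs (limitSet F) ihat ∩ A ×ˢ B) \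
          {a : PBall | a ∈ limitSet F ∧ ∃ b c d : PBall,
            b ∈ limitSet F ∧ c ∈ limitSet F ∧ d ∈ limitSet F ∧
            b ≠ c ∧ b ≠ d ∧ c ≠ d ∧
            ihat b = ihat a ∧ ihat c = ihat a ∧ ihat d = ihat a} : Set PBall) ≃ₜ
        (ihat '' (Prod.fst '' (EndPairs (limitSet F) ihat ∩ A ×ˢ B) \
          {a : PBall | a ∈ limitSet F ∧ ∃ b c d : PBall,
            b ∈ limitSet F ∧ c ∈ limitSet F ∧ d ∈ limitSet F ∧
            b ≠ c ∧ b ≠ d ∧ c ≠ d ∧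
            ihat b = ihat a ∧ ihat c = ihat a ∧ ihat d = ihat a}) : Set PBall),
      ∀ x : (Prod.fst '' (EndPairs (limitSet F) ihat ∩ A ×ˢ B) \
          {a : PBall | a ∈ limitSet F ∧ ∃ b c d : PBall,
            b ∈ limitSet F ∧ c ∈ limitSet F ∧ d ∈ limitSet F ∧
            b ≠ c ∧ b ≠ d ∧ c ≠ d ∧
            ihat b = ihat a ∧ ihat c = ihat a ∧ ihat d = ihat a} : Set PBall),
        (e x : PBall) = ihat x :=
  restriction_to_A_minus_Z2_homeomorphism_general F ρ ihat hCT A B hA hB hAB hAsub hBsub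
end
end
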